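/- For every complex number s with Re(s) > 1, the family ((1 - q^{-s·deg π})^{-1}) indexed by the monic irreducible polynomials π in F_q[X] is multipliable, and its product equals the sum of the summable family (q^{-s·deg f}) indexed by all monic polynomials f in F_q[X]; in particular this product equals (1 - q^{1-s})^{-1}. -/

import Mathlib

/-!
Monic polynomials over `F_q` form the free commutative monoid on the monic irreducibles, and
there are `q ^ n` of them in degree `n`, so `∑ q^(-s·deg f)` is the geometric series in
`q^(1-s)`. The monic irreducibles are countably infinite; a bijection with the rational primes
identifies monic polynomials with positive integers multiplicatively (unique factorisation on
both sides), the weight `q^(-s·deg)` becomes a completely multiplicative function on `ℕ`, and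
Mathlib's Euler product for such functions carries over.
-/

open Polynomial UniqueFactorizationMonoid

section NatMultiplicative
variable {M : Type*} [CommMonoidWithZero M]

noncomputable def Nat.monoidWithZeroHomOfPrimes (c : ℕ → M) : ℕ →*₀ M where
  toFun n := if n = 0 then 0 else n.factorization.prod fun p k => c p ^ k
  map_zero' := if_pos rfl
  map_one' := by simp
  map_mul' m n := by
    rcases eq_or_ne m 0 with rfl | hm
    · simp
    rcases eq_or_ne n 0 with rfl | hn
    · simp
    simp only [mul_ne_zero hm hn, hm, hn, if_false, Nat.factorization_mul hm hn]
    exact Finsupp.prod_add_index' (fun _ => pow_zero _) fun _ _ _ => pow_add _ _ _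

theorem Nat.monoidWithZeroHomOfPrimes_prime (c : ℕ → M) {p : ℕ} (hp : p.Prime) :
    Nat.monoidWithZeroHomOfPrimes c p = c p := by
  simp [Nat.monoidWithZeroHomOfPrimes, hp.ne_zero, hp.factorization]

theorem Nat.monoidWithZeroHomOfPrimes_primeMultiset_prod (c : ℕ → M) (v : Multiset Nat.Primes) :
    Nat.monoidWithZeroHomOfPrimes c (PrimeMultiset.prod v) =
      (v.map fun p : Nat.Primes => c p).prod := by
  induction v using Multiset.induction with
  | empty => simp [PrimeMultiset.prod, PrimeMultiset.toPNatMultiset]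
  | cons p v ih =>
    have hprod : (PrimeMultiset.prod (p ::ₘ v) : ℕ) = p * PrimeMultiset.prod v := by
      simp [PrimeMultiset.prod, PrimeMultiset.toPNatMultiset]; rfl
    rw [hprod, map_mul, ih, Nat.monoidWithZeroHomOfPrimes_prime c p.2, Multiset.map_cons,
      Multiset.prod_cons]

end NatMultiplicative

theorem eulerProduct_multiset_hasProd {P 𝕜 : Type*} [Countable P] [Infinite P]
    [NormedField 𝕜] [CompleteSpace 𝕜] (a : P → 𝕜)
    (hsum : Summable fun v : Multiset P => ‖(v.map a).prod‖) :
    HasProd (fun p => (1 - a p)⁻¹) (∑' v : Multiset P, (v.map a).prod) := by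
  obtain ⟨e⟩ : Nonempty (P ≃ Nat.Primes) := nonempty_equiv_of_countable
  let c : ℕ → 𝕜 := Function.extend (↑) (a ∘ e.symm) 0
  have hc (p : Nat.Primes) : c p = a (e.symm p) := Subtype.val_injective.extend_apply _ _ p
  let g := Nat.monoidWithZeroHomOfPrimes c
  let N : Multiset P → ℕ := fun v => (PrimeMultiset.prod (v.map e) : ℕ)
  have hN_inj : N.Injective :=
    PNat.coe_injective.comp <| PNat.factorMultisetEquiv.symm.injective.comp
      (Multiset.map_injective e.injective)
  have hgN (v : Multiset P) : g (N v) = (v.map a).prod := by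
    simp [g, N, Nat.monoidWithZeroHomOfPrimes_primeMultiset_prod, Multiset.map_map, hc]
  have hg_out : ∀ n ∉ Set.range N, g n = 0 := by
    intro n hn
    obtain rfl : n = 0 := by
      by_contra h
      obtain ⟨u, hu⟩ := (Multiset.map_surjective_of_surjective e.surjective)
        (PNat.factorMultiset ⟨n, Nat.pos_of_ne_zero h⟩)
      exact hn ⟨u, by simp only [N, hu]; exact congrArg _ (PNat.prod_factorMultiset _)⟩
    exact map_zero g
  have hg_sum : Summable (‖g ·‖) := by
    refine (hN_inj.summable_iff fun n hn => by simp [hg_out n hn]).mp ?_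
    simpa [Function.comp_def, hgN] using hsum
  have hEuler := e.hasProd_iff.mpr
    (EulerProduct.eulerProduct_completely_multiplicative_hasProd hg_sum)
  convert hEuler using 1
  · funext p; simp [g, Nat.monoidWithZeroHomOfPrimes_prime _ (e p).2, hc]
  · rw [← hN_inj.tsum_eq fun n hn => by_contra fun h => hn (hg_out n h)]
    simp [hgN]

theorem hasSum_sigma_pi_pow {α 𝕜 : Type*} [Fintype α] [NormedField 𝕜] [CompleteSpace 𝕜] {t : 𝕜}
    (ht : Fintype.card α * ‖t‖ < 1) :
    HasSum (fun x : Σ n, Fin n → α => t ^ x.1) (1 - Fintype.card α * t)⁻¹ := by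
  have hsum : Summable fun x : Σ n, Fin n → α => t ^ x.1 := by
    refine .of_norm ((summable_sigma_of_nonneg fun _ => by positivity).mpr
      ⟨fun _ => .of_finite, ?_⟩)
    refine (summable_geometric_of_lt_one (by positivity) ht).congr fun n => ?_
    simp [tsum_fintype, mul_pow]
  have hqt : ‖(Fintype.card α : 𝕜) * t‖ < 1 :=
    (norm_mul_le _ _).trans_lt <| (mul_le_mul_of_nonneg_right
      ((Nat.norm_cast_le _).trans_eq (by simp)) (norm_nonneg t)).trans_lt ht
  convert hsum.hasSum using 1
  rw [hsum.tsum_sigma, ← tsum_geometric_of_norm_lt_one hqt]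
  congr 1 with n
  simp [tsum_fintype, mul_pow]

section Polynomial
variable {F : Type*} [Field F]

theorem Polynomial.infinite_setOf_monic_irreducible :
    {π : F[X] | π.Monic ∧ Irreducible π}.Infinite := by
  intro hfin
  set P := ∏ π ∈ hfin.toFinset, π
  have hP : P.Monic := monic_prod_of_monic _ _ fun π hπ => (hfin.mem_toFinset.mp hπ).1
  have hXP : X ∣ P := Finset.dvd_prod_of_mem _ (hfin.mem_toFinset.mpr ⟨monic_X, irreducible_X⟩)
  have hP_pos : 0 < P.natDegree := (natDegree_le_of_dvd hXP hP.ne_zero).trans_lt' (by simp)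
  have hP1 : ¬IsUnit (P + 1) := by
    refine not_isUnit_of_natDegree_pos _ ?_
    rwa [natDegree_add_eq_left_of_degree_lt]
    exact degree_one.trans_lt (by rwa [degree_eq_natDegree hP.ne_zero, Nat.cast_pos])
  obtain ⟨π, hπ, hirr, hdvd⟩ := exists_monic_irreducible_factor (P + 1) hP1
  have hπP : π ∣ P := Finset.dvd_prod_of_mem _ (hfin.mem_toFinset.mpr ⟨hπ, hirr⟩)
  exact hirr.not_isUnit (isUnit_of_dvd_one ((dvd_add_right hπP).mp hdvd))

noncomputable def Polynomial.monicEquivSigma : {f : F[X] // f.Monic} ≃ Σ n, Fin n → F :=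
  (Equiv.sigmaFiberEquiv fun f : {f : F[X] // f.Monic} => f.1.natDegree).symm.trans <|
    Equiv.sigmaCongrRight fun n => ((Equiv.subtypeSubtypeEquivSubtypeInter _ _).trans
      (monicEquivDegreeLT n)).trans (degreeLTEquiv F n).toEquiv

theorem Polynomial.monicEquivSigma_fst (f : {f : F[X] // f.Monic}) :
    (monicEquivSigma f).1 = f.1.natDegree :=
  rfl

theorem Polynomial.hasSum_pow_natDegree_monic [Fintype F] {𝕜 : Type*} [NormedField 𝕜]
    [CompleteSpace 𝕜] {t : 𝕜} (ht : Fintype.card F * ‖t‖ < 1) :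
    HasSum (fun f : {f : F[X] // f.Monic} => t ^ f.1.natDegree) (1 - Fintype.card F * t)⁻¹ := by
  simpa only [Function.comp_def, monicEquivSigma_fst] using
    monicEquivSigma.hasSum_iff.mpr (hasSum_sigma_pi_pow ht)

variable [DecidableEq F]

theorem Polynomial.monic_irreducible_of_mem_normalizedFactors {f π : F[X]}
    (hπ : π ∈ normalizedFactors f) : π.Monic ∧ Irreducible π := by
  have hirr := irreducible_of_normalized_factor π hπ
  exact ⟨normalize_normalized_factor π hπ ▸ monic_normalize hirr.ne_zero, hirr⟩

noncomputable def Polynomial.multisetMonicIrreducibleEquiv :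
    Multiset {π : F[X] // π.Monic ∧ Irreducible π} ≃ {f : F[X] // f.Monic} where
  toFun v := ⟨(v.map (↑)).prod, monic_multiset_prod_of_monic _ _ fun π _ => π.2.1⟩
  invFun f := (normalizedFactors f.1).pmap Subtype.mk
    fun _ => monic_irreducible_of_mem_normalizedFactors
  left_inv v := by
    refine Multiset.map_injective Subtype.val_injective ?_
    have hirr : ∀ π ∈ v.map Subtype.val, Irreducible π :=
      Multiset.forall_mem_map_iff.mpr fun π _ => π.2.2
    simp only [Multiset.map_pmap, Multiset.pmap_eq_map, normalizedFactors_prod_eq _ hirr,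
      Multiset.map_map]
    exact Multiset.map_congr rfl fun π _ => π.2.1.normalize_eq_self
  right_inv f := by
    ext1
    dsimp only
    rw [Multiset.map_pmap, Multiset.pmap_eq_map, Multiset.map_id']
    refine eq_of_monic_of_associated ?_ f.2 (prod_normalizedFactors f.2.ne_zero)
    simpa using monic_multiset_prod_of_monic _ id fun _ h =>
      (monic_irreducible_of_mem_normalizedFactors h).1

theorem Polynomial.prod_map_pow_natDegree {M : Type*} [CommMonoid M] (t : M)
    (v : Multiset {π : F[X] // π.Monic ∧ Irreducible π}) :
    (v.map fun π => t ^ π.1.natDegree).prod =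
      t ^ (multisetMonicIrreducibleEquiv v).1.natDegree := by
  rw [multisetMonicIrreducibleEquiv, Equiv.coe_fn_mk,
    natDegree_multiset_prod_of_monic _ (Multiset.forall_mem_map_iff.mpr fun π _ => π.2.1)]
  induction v using Multiset.induction with
  | empty => simp
  | cons π v ih => simp [ih, pow_add]

theorem Polynomial.hasProd_one_sub_pow_natDegree_inv [Finite F] {𝕜 : Type*} [NormedField 𝕜]
    [CompleteSpace 𝕜] {t : 𝕜}
    (ht : Summable fun f : {f : F[X] // f.Monic} => ‖t‖ ^ f.1.natDegree) :
    HasProd (fun π : {π : F[X] // π.Monic ∧ Irreducible π} => (1 - t ^ π.1.natDegree)⁻¹)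
      (∑' f : {f : F[X] // f.Monic}, t ^ f.1.natDegree) := by
  have : Countable F[X] := (AddMonoidAlgebra.coeff_injective.comp toFinsupp_injective).countable
  have : Infinite {π : F[X] // π.Monic ∧ Irreducible π} :=
    infinite_setOf_monic_irreducible.to_subtype
  rw [← multisetMonicIrreducibleEquiv.tsum_eq]
  simp only [← prod_map_pow_natDegree]
  refine eulerProduct_multiset_hasProd _ ?_
  refine (multisetMonicIrreducibleEquiv.summable_iff.mpr ht).congr fun v => ?_
  simp [prod_map_pow_natDegree, norm_pow]

end Polynomial

open Polynomial in
/-- For every complex `s` with `Re(s) > 1`, the family `(1 - q^(-s·deg π))⁻¹`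
indexed by the monic irreducible polynomials `π ∈ F_q[X]` is multipliable, and
its product equals the sum of the summable family `q^(-s·deg f)` indexed by all
monic polynomials `f ∈ F_q[X]`; in particular this product equals
`(1 - q^(1-s))⁻¹`. -/
theorem stmt_9 (F : Type*) [Field F] [Fintype F] (s : ℂ) (hs : 1 < s.re) :
    Summable
      (fun f : {f : Polynomial F // f.Monic} =>
        (Fintype.card F : ℂ) ^ (-s * (f.1.natDegree : ℂ))) ∧
    HasProd
      (fun π : {π : Polynomial F // π.Monic ∧ Irreducible π} =>
        (1 - (Fintype.card F : ℂ) ^ (-s * (π.1.natDegree : ℂ)))⁻¹)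
      (∑' f : {f : Polynomial F // f.Monic},
        (Fintype.card F : ℂ) ^ (-s * (f.1.natDegree : ℂ))) ∧
    (∑' f : {f : Polynomial F // f.Monic},
        (Fintype.card F : ℂ) ^ (-s * (f.1.natDegree : ℂ))) =
      (1 - (Fintype.card F : ℂ) ^ (1 - s))⁻¹ := by
  classical
  set q := Fintype.card F
  have hq : 0 < q := Fintype.card_pos
  set t : ℂ := (q : ℂ) ^ (-s)
  have hqt : q * ‖t‖ < 1 := by
    have hexp : 1 + (-s).re ≠ 0 := by rw [Complex.neg_re]; linarith
    rw [Complex.norm_natCast_cpow_of_pos hq, ← Real.rpow_one_add' (by positivity) hexp]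
    exact Real.rpow_lt_one_of_one_lt_of_neg (by exact_mod_cast Fintype.one_lt_card)
      (by simp; linarith)
  have hsum := hasSum_pow_natDegree_monic (F := F) hqt
  have hnorm := (hasSum_pow_natDegree_monic (F := F) (t := ‖t‖) (by simpa using hqt)).summable
  simp only [Complex.cpow_mul_nat]
  refine ⟨hsum.summable, hasProd_one_sub_pow_natDegree_inv hnorm, ?_⟩
  rw [hsum.tsum_eq, sub_eq_add_neg 1 s, Complex.cpow_add _ _ (by exact_mod_cast hq.ne'),
    Complex.cpow_one]
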